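/- Let j₁ ≥ j₂ ≥ 1 and M ≥ 1 be integers. Work in ℚ(u) and set q := u². Then u^{M·j₁ + M + j₁ + j₂²} · Σ_{k=1}^{j₂} Σ_{r=0}^{k−1} Σ_{l₁=0}^{j₁−k} Σ_{l₂=0}^{j₂−k} q^{M·r} · [ (−1)^{l₁} q^{l₁(l₁−1)/2 − l₁M} / ((q;q)_{l₁}(q;q)_{j₁−k−l₁}) ] · [ (−1)^{l₂} u^{l₂(l₂+1+2k−2j₂)} / ((q;q)_{l₂}(q;q)_{j₂−k−l₂}) ] · (−1)^k u^{k(k−1) − 2k(M+j₂)} = (−1)^{j₁} · [ M choose j₁−j₂ ]_q · [M·j₂]_q / [M]_q. (This is the full two-holed open Gromov–Witten computation of Section 5.3 for (Y^{[3]}_{(a,b)})^op: the left-hand side is the connected two-legged topological vertex sum over pairs of hook partitions expressed through the q-factorial formula for skew hook Schur functions, with M = aj₁/b, and the identity is equivalent to the closed form O_{j₁,j₂}((Y^{[3]}_{(a,b)})^op) = (−1)^{j₁(1+a/b)+j₂+1} [ aj₁/b choose j₁−j₂ ]_q [j₁j₂a/b]_q/([j₁a/b]_q·j₁j₂) of equation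 (5.6).) -/

import Mathlib

/-!
STATEMENT 12: the full two-holed open Gromov–Witten computation of Section 5.3 for
(Y^{[3]}_{(a,b)})^op. In ℚ(u), with q = u²:
u^{Mj₁+M+j₁+j₂²} · Σ_{k=1}^{j₂} Σ_{r=0}^{k−1} Σ_{l₁=0}^{j₁−k} Σ_{l₂=0}^{j₂−k}
  q^{Mr} · [(−1)^{l₁} q^{l₁(l₁−1)/2 − l₁M}/((q;q)_{l₁}(q;q)_{j₁−k−l₁})]
        · [(−1)^{l₂} u^{l₂(l₂+1+2k−2j₂)}/((q;q)_{l₂}(q;q)_{j₂−k−l₂})]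
        · (−1)^k u^{k(k−1) − 2k(M+j₂)}
  = (−1)^{j₁} · [ M choose j₁−j₂ ]_q · [Mj₂]_q / [M]_q.
-/

open Finset

noncomputable section

/-- The q-Pochhammer symbol `(q;q)_n = ∏_{i=1}^n (1 − q^i)`. -/
def qPoch (q : RatFunc ℚ) (n : ℕ) : RatFunc ℚ := ∏ i ∈ Finset.range n, (1 - q ^ (i + 1))

/-- The symmetrised q-integer `[n]_q = uⁿ − u⁻ⁿ` in `ℚ(u)`, for `q = u²`. -/
def qint (n : ℤ) : RatFunc ℚ := RatFunc.X ^ n - RatFunc.X ^ (-n)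

/-- The symmetrised q-factorial `[n]_q!` in `ℚ(u)`, for `q = u²`. -/
def qfact (n : ℕ) : RatFunc ℚ := ∏ i ∈ Finset.range n, qint ((i : ℤ) + 1)

/-- The symmetrised q-binomial `[n choose m]_q` in `ℚ(u)`, for `q = u²`;
it is 0 for `m > n`. -/
def qbinom (n m : ℕ) : RatFunc ℚ :=
  if m ≤ n then qfact n / (qfact m * qfact (n - m)) else 0

namespace TL
local notation "Q" => ((RatFunc.X : RatFunc ℚ)^2)

lemma u_ne : (RatFunc.X : RatFunc ℚ) ≠ 0 := RatFunc.X_ne_zero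

lemma upow_ne_one {n : ℕ} (hn : n ≠ 0) : (RatFunc.X : RatFunc ℚ) ^ n ≠ 1 := by
  intro h
  have h2 : (Polynomial.X : Polynomial ℚ) ^ n = 1 := by
    apply RatFunc.algebraMap_injective ℚ
    rw [map_pow, map_one, RatFunc.algebraMap_X, h]
  have := congrArg Polynomial.natDegree h2
  simp [Polynomial.natDegree_X_pow] at this
  exact hn this

lemma one_sub_ne {i : ℕ} (hi : i ≠ 0) : (1 : RatFunc ℚ) - Q ^ i ≠ 0 := by
  rw [sub_ne_zero, ← pow_mul]
  exact fun h => upow_ne_one (by omega) h.symm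

lemma qPoch_ne (n : ℕ) : qPoch Q n ≠ 0 := by
  apply Finset.prod_ne_zero_iff.2
  intro i _
  exact one_sub_ne (Nat.succ_ne_zero i)

lemma qPoch_succ (n : ℕ) : qPoch Q (n + 1) = qPoch Q n * (1 - Q ^ (n + 1)) :=
  Finset.prod_range_succ _ _

lemma qbinT (x : RatFunc ℚ) : ∀ n : ℕ,
    ∑ l ∈ range (n+1), (-1:RatFunc ℚ)^l * Q^(l.choose 2) * x^l *
      (qPoch Q n / (qPoch Q l * qPoch Q (n - l)))
    = ∏ i ∈ range n, (1 - x * Q^i) := by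
  intro n
  induction n with
  | zero => simp [qPoch]
  | succ n ih =>
    have hsplit : ∀ l ∈ range (n+2),
        (-1:RatFunc ℚ)^l * Q^(l.choose 2) * x^l *
          (qPoch Q (n+1) / (qPoch Q l * qPoch Q (n+1 - l)))
        = (-1:RatFunc ℚ)^l * Q^(l.choose 2) * x^l *
            (qPoch Q n * (1 - Q^(n+1-l)) / (qPoch Q l * qPoch Q (n+1 - l)))
          + (-1:RatFunc ℚ)^l * Q^(l.choose 2) * x^l *
            (Q^(n+1-l) * (qPoch Q n * (1 - Q^l)) / (qPoch Q l * qPoch Q (n+1 - l))) := by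
      intro l hl
      have hl' : l ≤ n + 1 := by simpa [Nat.lt_succ_iff] using hl
      have hq : (Q:RatFunc ℚ)^(n+1-l) * Q^l = Q^(n+1) := by
        rw [← pow_add]; congr 1; omega
      have e1 : qPoch Q (n+1) = qPoch Q n * (1 - Q^(n+1-l))
          + Q^(n+1-l) * (qPoch Q n * (1 - Q^l)) := by
        rw [qPoch_succ]
        linear_combination (qPoch Q n) * hq
      rw [e1, add_div, mul_add]
    rw [Finset.sum_congr rfl hsplit, Finset.sum_add_distrib]
    have hA : ∑ l ∈ range (n+2), (-1:RatFunc ℚ)^l * Q^(l.choose 2) * x^l *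
        (qPoch Q n * (1 - Q^(n+1-l)) / (qPoch Q l * qPoch Q (n+1 - l)))
        = ∏ i ∈ range n, (1 - x * Q^i) := by
      rw [Finset.sum_range_succ]
      have hlast : (1:RatFunc ℚ) - Q^(n+1-(n+1)) = 0 := by simp
      rw [hlast]
      simp only [mul_zero, zero_div, add_zero]
      rw [← ih]
      apply Finset.sum_congr rfl
      intro l hl
      have hl' : l ≤ n := by simpa [Nat.lt_succ_iff] using hl
      have h2 : qPoch Q (n+1-l) = qPoch Q (n-l) * (1 - Q^(n+1-l)) := by
        rw [show n+1-l = (n-l)+1 by omega, qPoch_succ, show n-l+1 = n+1-l by omega]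
      rw [h2, show qPoch Q l * (qPoch Q (n-l) * (1 - Q^(n+1-l)))
            = (qPoch Q l * qPoch Q (n-l)) * (1 - Q^(n+1-l)) by ring,
        mul_div_mul_right _ _ (one_sub_ne (by omega))]
    have hB : ∑ l ∈ range (n+2), (-1:RatFunc ℚ)^l * Q^(l.choose 2) * x^l *
        (Q^(n+1-l) * (qPoch Q n * (1 - Q^l)) / (qPoch Q l * qPoch Q (n+1 - l)))
        = (-(x * Q^n)) * ∏ i ∈ range n, (1 - x * Q^i) := by
      rw [Finset.sum_range_succ']
      have h0 : ((1:RatFunc ℚ) - Q^(0:ℕ)) = 0 := by simp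
      rw [h0]
      simp only [mul_zero, zero_mul, zero_div, mul_zero, add_zero, pow_zero]
      rw [← ih, Finset.mul_sum]
      apply Finset.sum_congr rfl
      intro m hm
      have hm' : m ≤ n := by simpa [Nat.lt_succ_iff] using hm
      have h2 : qPoch Q (m+1) = qPoch Q m * (1 - Q^(m+1)) := qPoch_succ m
      have hsub : n + 1 - (m+1) = n - m := by omega
      have hch : (m+1).choose 2 = m.choose 2 + m := by
        rw [Nat.choose_succ_succ]; simp [Nat.choose_one_right, Nat.add_comm]
      have hqq : (Q:RatFunc ℚ)^m * Q^(n-m) = Q^n := by rw [← pow_add]; congr 1; omega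
      rw [hsub, h2, hch, pow_succ (-1:RatFunc ℚ), pow_add (Q:RatFunc ℚ), pow_succ x,
        show qPoch Q m * (1 - Q^(m+1)) * qPoch Q (n-m)
          = (qPoch Q m * qPoch Q (n-m)) * (1 - Q^(m+1)) by ring,
        show (Q:RatFunc ℚ)^(n-m) * (qPoch Q n * (1 - Q^(m+1)))
          = (Q^(n-m) * qPoch Q n) * (1 - Q^(m+1)) by ring,
        mul_div_mul_right _ _ (one_sub_ne (by omega))]
      rw [← hqq]
      field_simp [qPoch_ne]
    rw [hA, hB, Finset.prod_range_succ]
    ring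

lemma qPoch_zero : qPoch Q 0 = 1 := Finset.prod_range_zero _

lemma qbinDiv (x : RatFunc ℚ) (n : ℕ) :
    ∑ l ∈ range (n+1), (-1:RatFunc ℚ)^l * Q^(l.choose 2) * x^l / (qPoch Q l * qPoch Q (n - l))
    = (∏ i ∈ range n, (1 - x * Q^i)) / qPoch Q n := by
  rw [← qbinT x n, Finset.sum_div]
  apply Finset.sum_congr rfl
  intro l hl
  field_simp [qPoch_ne]

def tri (m : ℕ) : ℕ := ∑ i ∈ range m, (i+1)

lemma tri_succ (m : ℕ) : tri (m+1) = tri m + (m+1) := Finset.sum_range_succ _ _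

lemma tri_add (a b : ℕ) : tri (a + b) = tri a + tri b + a * b := by
  induction b with
  | zero => simp [tri]
  | succ b ih =>
    have : a + (b+1) = (a+b) + 1 := by omega
    rw [this, tri_succ, ih, tri_succ, Nat.mul_succ]
    omega

lemma qint_nat (m : ℕ) : qint m = RatFunc.X^(-(m:ℤ)) * (Q^m - 1) := by
  rw [qint, mul_sub, mul_one, ← pow_mul, ← zpow_natCast (RatFunc.X : RatFunc ℚ) (2*m),
    ← zpow_add₀ u_ne]
  congr 2
  push_cast; ring

lemma qpow_sub_one_ne {m : ℕ} (hm : m ≠ 0) : (Q:RatFunc ℚ)^m - 1 ≠ 0 := by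
  intro h
  exact one_sub_ne hm (by linear_combination -h)

lemma qint_ne {m : ℕ} (hm : m ≠ 0) : qint m ≠ 0 := by
  rw [qint_nat]
  apply mul_ne_zero (zpow_ne_zero _ u_ne)
  intro h
  exact one_sub_ne hm (by linear_combination -h)

lemma qfact_eq (m : ℕ) :
    qfact m = (-1:RatFunc ℚ)^m * RatFunc.X^(-(tri m : ℤ)) * qPoch Q m := by
  induction m with
  | zero => simp [qfact, tri, qPoch]
  | succ m ih =>
    rw [qfact, Finset.prod_range_succ, ← qfact,
      show ((m:ℤ) + 1) = ((m+1 : ℕ) : ℤ) by push_cast; ring, qint_nat, ih,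
      qPoch_succ, tri_succ]
    rw [show (-((tri m + (m+1) : ℕ) : ℤ)) = (-(tri m:ℤ)) + (-((m+1:ℕ):ℤ)) by push_cast; ring,
      zpow_add₀ u_ne]
    rw [pow_succ (-1:RatFunc ℚ)]
    ring

lemma geo (M j : ℕ) (hM : M ≠ 0) :
    ∑ r ∈ range j, (RatFunc.X : RatFunc ℚ)^(2*M*r)
      = RatFunc.X^((M:ℤ)*j - M) * (qint (M*j) / qint M) := by
  have h1 : ∀ r, (RatFunc.X : RatFunc ℚ)^(2*M*r) = ((RatFunc.X : RatFunc ℚ)^(2*M))^r := by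
    intro r; rw [← pow_mul]
  simp only [h1]
  rw [geom_sum_eq (upow_ne_one (by omega)),
    show ((M:ℤ)*j) = ((M*j : ℕ) : ℤ) by push_cast; ring, qint_nat, qint_nat]
  have e1 : ((RatFunc.X : RatFunc ℚ)^(2*M))^j - 1 = Q^(M*j) - 1 := by
    rw [← pow_mul, ← pow_mul]; ring_nf
  have e2 : (RatFunc.X : RatFunc ℚ)^(2*M) - 1 = Q^M - 1 := by rw [← pow_mul]
  have hzz : (RatFunc.X:RatFunc ℚ)^(((M*j:ℕ):ℤ) - M) * RatFunc.X^(-((M*j:ℕ):ℤ)) = RatFunc.X^(-(M:ℤ)) := by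
    rw [← zpow_add₀ u_ne]; congr 1; push_cast; ring
  rw [e1, e2, mul_div_assoc']
  rw [div_eq_div_iff (qpow_sub_one_ne hM)
    (mul_ne_zero (zpow_ne_zero _ u_ne) (qpow_sub_one_ne (by positivity)))]
  linear_combination (-(((Q:RatFunc ℚ)^(M*j) - 1)*((Q:RatFunc ℚ)^M - 1))) * hzz


lemma prod_shift (M : ℕ) : ∀ n, n ≤ M →
    (∏ i ∈ range n, (1 - (Q:RatFunc ℚ)^(M-i))) * qPoch Q (M-n) = qPoch Q M := by
  intro n
  induction n with
  | zero => simp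
  | succ n ih =>
    intro h
    have h1 : M - n = (M - (n+1)) + 1 := by omega
    have h2 : qPoch Q (M-n) = qPoch Q (M-(n+1)) * (1 - Q^(M-n)) := by
      rw [h1, qPoch_succ, ← h1]
    rw [Finset.prod_range_succ,
      show (∏ i ∈ range n, (1 - (Q:RatFunc ℚ)^(M-i))) * (1 - Q^(M-n)) * qPoch Q (M-(n+1))
        = (∏ i ∈ range n, (1 - (Q:RatFunc ℚ)^(M-i))) * (qPoch Q (M-(n+1)) * (1 - Q^(M-n))) by ring,
      ← h2, ih (by omega)]

lemma prod_zpow (f : ℕ → ℤ) (n : ℕ) :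
    ∏ i ∈ range n, (RatFunc.X : RatFunc ℚ)^(f i) = RatFunc.X^(∑ i ∈ range n, f i) := by
  induction n with
  | zero => simp
  | succ n ih => rw [Finset.prod_range_succ, Finset.sum_range_succ, ih, zpow_add₀ u_ne]

lemma prod_neg (M n : ℕ) (h : n ≤ M) :
    ∏ i ∈ range n, (1 - (RatFunc.X:RatFunc ℚ)^(-(2*(M:ℤ))) * Q^i)
    = (-1:RatFunc ℚ)^n * RatFunc.X^((n:ℤ)*((n:ℤ)-1) - 2*n*M) * (qPoch Q M / qPoch Q (M-n)) := by
  have step : ∀ i ∈ range n, (1 - (RatFunc.X:RatFunc ℚ)^(-(2*(M:ℤ))) * Q^i)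
      = (-1) * ((RatFunc.X:RatFunc ℚ)^(2*((i:ℤ)-M)) * (1 - Q^(M-i))) := by
    intro i hi
    have hi' : i < n := Finset.mem_range.mp hi
    have e1 : ((RatFunc.X:RatFunc ℚ)^(-(2*(M:ℤ)))) * Q^i = RatFunc.X^(2*((i:ℤ)-M)) := by
      rw [← pow_mul, ← zpow_natCast (RatFunc.X : RatFunc ℚ) (2*i), ← zpow_add₀ u_ne]
      congr 1; push_cast; ring
    have e2 : (RatFunc.X:RatFunc ℚ)^(2*((i:ℤ)-M)) * Q^(M-i) = 1 := by
      rw [← pow_mul, ← zpow_natCast (RatFunc.X : RatFunc ℚ) (2*(M-i)), ← zpow_add₀ u_ne,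
        show 2*((i:ℤ)-M) + (2*(M-i) : ℕ) = 0 by push_cast [Nat.cast_sub (le_of_lt (lt_of_lt_of_le hi' h))]; ring,
        zpow_zero]
    linear_combination (-1 : RatFunc ℚ) * e1 - e2
  rw [Finset.prod_congr rfl step, Finset.prod_mul_distrib, Finset.prod_const,
    Finset.card_range, Finset.prod_mul_distrib, prod_zpow]
  have hsum : ∀ m : ℕ, m ≤ M → ∑ i ∈ range m, (2*((i:ℤ)-M)) = (m:ℤ)*((m:ℤ)-1) - 2*m*M := by
    intro m
    induction m with
    | zero => simp
    | succ m ih =>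
      intro hm
      rw [Finset.sum_range_succ, ih (by omega)]
      push_cast; ring
  rw [hsum n h]
  have hps : (∏ i ∈ range n, (1 - (Q:RatFunc ℚ)^(M-i))) = qPoch Q M / qPoch Q (M-n) := by
    rw [eq_div_iff (qPoch_ne _)]
    exact prod_shift M n h
  rw [hps]
  ring

lemma qbinom_eq (M n : ℕ) (h : n ≤ M) :
    qbinom M n = RatFunc.X^(-((n:ℤ)*((M:ℤ)-(n:ℤ)))) * (qPoch Q M / (qPoch Q n * qPoch Q (M-n))) := by
  obtain ⟨m, rfl⟩ : ∃ m, M = n + m := ⟨M - n, by omega⟩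
  have hmn : n + m - n = m := by omega
  rw [qbinom, if_pos h, hmn, qfact_eq, qfact_eq, qfact_eq]
  have hkey : (-(tri (n+m) :ℤ)) = (-(tri n:ℤ)) + ((-(tri m:ℤ)) + (-((n:ℤ)*(((n:ℤ)+m)-(n:ℤ))))) := by
    have ht := tri_add n m
    push_cast [ht]; ring
  rw [hkey, zpow_add₀ u_ne, zpow_add₀ u_ne, pow_add]
  have h1 : ((-1:RatFunc ℚ))^n ≠ 0 := pow_ne_zero _ (by norm_num)
  have h2 : ((-1:RatFunc ℚ))^m ≠ 0 := pow_ne_zero _ (by norm_num)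
  field_simp [qPoch_ne, zpow_ne_zero _ u_ne]
  rw [mul_div_cancel_left₀ _ (mul_ne_zero (zpow_ne_zero _ u_ne) (zpow_ne_zero _ u_ne)), Nat.cast_add]


lemma two_choose_two (l : ℕ) : ((l.choose 2 : ℕ) : ℤ) * 2 = (l:ℤ) * ((l:ℤ) - 1) := by
  induction l with
  | zero => simp
  | succ t ih =>
    rw [Nat.choose_succ_succ, Nat.choose_one_right]
    push_cast
    push_cast at ih
    linear_combination ih

lemma pullC (R : ℕ) (f : ℕ → RatFunc ℚ) (P C : RatFunc ℚ) :
    ∑ i ∈ range R, P * f i * C = P * (∑ i ∈ range R, f i) * C := by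
  rw [Finset.mul_sum, Finset.sum_mul]

lemma pullA3 (R : ℕ) (f : ℕ → RatFunc ℚ) (B C : RatFunc ℚ) :
    ∑ i ∈ range R, f i * B * C = (∑ i ∈ range R, f i) * B * C := by
  rw [Finset.sum_mul, Finset.sum_mul]

lemma pullB (R : ℕ) (f : ℕ → RatFunc ℚ) (A C D : RatFunc ℚ) :
    ∑ i ∈ range R, A * f i * C * D = A * (∑ i ∈ range R, f i) * C * D := by
  rw [Finset.mul_sum, Finset.sum_mul, Finset.sum_mul]

lemma pullA (R : ℕ) (f : ℕ → RatFunc ℚ) (B C D : RatFunc ℚ) :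
    ∑ i ∈ range R, f i * B * C * D = (∑ i ∈ range R, f i) * B * C * D := by
  rw [Finset.sum_mul, Finset.sum_mul, Finset.sum_mul]

lemma S2_closed (j₂ k : ℕ) (hk : k ≤ j₂) :
    ∑ l₂ ∈ range (j₂ - k + 1),
      (-1:RatFunc ℚ)^l₂ * RatFunc.X ^ ((l₂:ℤ) * ((l₂:ℤ) + 1 + 2*(k:ℤ) - 2*(j₂:ℤ)))
        / (qPoch Q l₂ * qPoch Q (j₂ - k - l₂))
    = (∏ i ∈ range (j₂-k), (1 - RatFunc.X^(2*(1+(k:ℤ)-(j₂:ℤ))) * Q^i)) / qPoch Q (j₂-k) := by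
  rw [← qbinDiv (RatFunc.X^(2*(1+(k:ℤ)-(j₂:ℤ)))) (j₂ - k)]
  apply Finset.sum_congr rfl
  intro l hl
  congr 1
  rw [mul_assoc]
  congr 1
  rw [← pow_mul, ← zpow_natCast (RatFunc.X : RatFunc ℚ) (2 * l.choose 2),
    ← zpow_natCast (RatFunc.X^(2*(1+(k:ℤ)-(j₂:ℤ)))) l, ← zpow_mul, ← zpow_add₀ u_ne]
  congr 1
  have := two_choose_two l
  push_cast
  push_cast at this
  linear_combination -this

lemma S2_zero (j₂ k : ℕ) (hk1 : 1 ≤ k) (hk : k < j₂) :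
    ∑ l₂ ∈ range (j₂ - k + 1),
      (-1:RatFunc ℚ)^l₂ * RatFunc.X ^ ((l₂:ℤ) * ((l₂:ℤ) + 1 + 2*(k:ℤ) - 2*(j₂:ℤ)))
        / (qPoch Q l₂ * qPoch Q (j₂ - k - l₂)) = 0 := by
  rw [S2_closed j₂ k (le_of_lt hk)]
  have hmem : j₂ - k - 1 ∈ range (j₂ - k) := by
    rw [Finset.mem_range]; omega
  rw [Finset.prod_eq_zero hmem, zero_div]
  rw [← pow_mul, ← zpow_natCast (RatFunc.X : RatFunc ℚ) (2*(j₂ - k - 1)), ← zpow_add₀ u_ne,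
    show 2*(1+(k:ℤ)-(j₂:ℤ)) + ((2*(j₂ - k - 1) : ℕ) : ℤ) = 0 by
      push_cast [Nat.cast_sub (by omega : 1 ≤ j₂ - k), Nat.cast_sub (le_of_lt hk)]
      ring,
    zpow_zero, sub_self]

lemma S1_closed (j₁ M k : ℕ) (hk : k ≤ j₁) :
    ∑ l₁ ∈ range (j₁ - k + 1),
      (-1:RatFunc ℚ)^l₁ * RatFunc.X ^ (2 * ((l₁.choose 2 : ℤ) - (l₁:ℤ) * (M:ℤ)))
        / (qPoch Q l₁ * qPoch Q (j₁ - k - l₁))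
    = (∏ i ∈ range (j₁-k), (1 - RatFunc.X^(-(2*(M:ℤ))) * Q^i)) / qPoch Q (j₁-k) := by
  rw [← qbinDiv (RatFunc.X^(-(2*(M:ℤ)))) (j₁ - k)]
  apply Finset.sum_congr rfl
  intro l hl
  congr 1
  rw [mul_assoc]
  congr 1
  rw [← pow_mul, ← zpow_natCast (RatFunc.X : RatFunc ℚ) (2 * l.choose 2),
    ← zpow_natCast (RatFunc.X^(-(2*(M:ℤ)))) l, ← zpow_mul, ← zpow_add₀ u_ne]
  congr 1
  push_cast
  ring

end TL

open TL in
theorem two_leg_vertex_evaluation (j₁ j₂ M : ℕ) (h₂₁ : j₂ ≤ j₁) (hj₂ : 1 ≤ j₂)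
    (hM : 1 ≤ M) :
    RatFunc.X ^ (M * j₁ + M + j₁ + j₂ ^ 2) *
        ∑ k ∈ Finset.Icc 1 j₂, ∑ r ∈ Finset.range k,
          ∑ l₁ ∈ Finset.range (j₁ - k + 1), ∑ l₂ ∈ Finset.range (j₂ - k + 1),
            RatFunc.X ^ (2 * M * r) *
              ((-1 : RatFunc ℚ) ^ l₁ *
                  RatFunc.X ^ (2 * ((l₁.choose 2 : ℤ) - (l₁ : ℤ) * M)) /
                (qPoch (RatFunc.X ^ 2) l₁ * qPoch (RatFunc.X ^ 2) (j₁ - k - l₁))) *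
              ((-1 : RatFunc ℚ) ^ l₂ *
                  RatFunc.X ^ ((l₂ : ℤ) * ((l₂ : ℤ) + 1 + 2 * k - 2 * j₂)) /
                (qPoch (RatFunc.X ^ 2) l₂ * qPoch (RatFunc.X ^ 2) (j₂ - k - l₂))) *
              ((-1 : RatFunc ℚ) ^ k *
                RatFunc.X ^ ((k : ℤ) * ((k : ℤ) - 1) - 2 * (k : ℤ) * ((M : ℤ) + j₂))) =
      (-1 : RatFunc ℚ) ^ j₁ * qbinom M (j₁ - j₂) * qint (M * j₂) / qint M := by
  have hjj : j₂ ∈ Finset.Icc 1 j₂ := Finset.mem_Icc.mpr ⟨hj₂, le_rfl⟩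
  rw [Finset.sum_eq_single_of_mem j₂ hjj (by
    intro k hk hkj
    obtain ⟨hk1, hk2⟩ := Finset.mem_Icc.mp hk
    have hklt : k < j₂ := lt_of_le_of_ne hk2 hkj
    apply Finset.sum_eq_zero; intro r _
    apply Finset.sum_eq_zero; intro l₁ _
    rw [pullC, S2_zero j₂ k hk1 hklt, mul_zero, zero_mul])]
  simp only [Nat.sub_self, zero_add, Finset.sum_range_one, Nat.cast_zero, zero_mul, zpow_zero,
    pow_zero, Nat.zero_sub, Nat.sub_zero, qPoch_zero, one_mul, mul_one, div_one]
  simp only [pullC]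
  simp only [S1_closed j₁ M j₂ h₂₁]
  rw [pullA3, geo M j₂ (by omega)]
  by_cases hMn : j₁ - j₂ ≤ M
  · rw [prod_neg M (j₁ - j₂) hMn, qbinom_eq M (j₁ - j₂) hMn]
    rw [show ((-1:RatFunc ℚ))^j₁ = (-1)^(j₁-j₂) * (-1)^j₂ from by rw [← pow_add]; congr 1; omega]
    have h1 : ((-1:RatFunc ℚ))^(j₁-j₂) ≠ 0 := pow_ne_zero _ (by norm_num)
    have h2 : ((-1:RatFunc ℚ))^j₂ ≠ 0 := pow_ne_zero _ (by norm_num)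
    have hqM : qint (M:ℤ) ≠ 0 := qint_ne (by omega : M ≠ 0)
    field_simp [qPoch_ne, zpow_ne_zero _ u_ne]
    rw [← zpow_natCast (RatFunc.X : RatFunc ℚ) (M * j₁ + M + j₁ + j₂ ^ 2)]
    push_cast
    have hX : (RatFunc.X:RatFunc ℚ)^((M:ℤ)*j₁ + M + j₁ + (j₂:ℤ)^2)
        * RatFunc.X^((M:ℤ)*j₂ - M)
        * RatFunc.X^(((j₁:ℤ)-j₂)*((j₁:ℤ)-j₂-1) - 2*((j₁:ℤ)-j₂)*M)
        * RatFunc.X^((j₂:ℤ)*((j₂:ℤ)-1) - 2*(j₂:ℤ)*((M:ℤ)+j₂))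
        * RatFunc.X^(((j₁:ℤ)-j₂)*((M:ℤ)-((j₁:ℤ)-j₂))) = 1 := by
      rw [← zpow_add₀ u_ne, ← zpow_add₀ u_ne, ← zpow_add₀ u_ne, ← zpow_add₀ u_ne,
        show ((M:ℤ)*j₁ + M + j₁ + (j₂:ℤ)^2) + ((M:ℤ)*j₂ - M)
          + (((j₁:ℤ)-j₂)*((j₁:ℤ)-j₂-1) - 2*((j₁:ℤ)-j₂)*M)
          + ((j₂:ℤ)*((j₂:ℤ)-1) - 2*(j₂:ℤ)*((M:ℤ)+j₂))
          + (((j₁:ℤ)-j₂)*((M:ℤ)-((j₁:ℤ)-j₂))) = 0 by ring, zpow_zero]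
    simp only [Nat.cast_sub h₂₁]
    have hE : (RatFunc.X:RatFunc ℚ)^(((j₁:ℤ)-j₂)*((M:ℤ)-((j₁:ℤ)-j₂)))
        * RatFunc.X^(-(((j₁:ℤ)-j₂)*((M:ℤ)-((j₁:ℤ)-j₂)))) = 1 := by
      rw [← zpow_add₀ u_ne, add_neg_cancel, zpow_zero]
    linear_combination (qint ((M:ℤ) * j₂) * RatFunc.X^(-(((j₁:ℤ)-j₂)*((M:ℤ)-((j₁:ℤ)-j₂))))) * hX
      - (qint ((M:ℤ) * j₂) * RatFunc.X^((M:ℤ)*j₁ + M + j₁ + (j₂:ℤ)^2) * RatFunc.X^((M:ℤ)*j₂ - M)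
        * RatFunc.X^(((j₁:ℤ)-j₂)*((j₁:ℤ)-j₂-1) - 2*((j₁:ℤ)-j₂)*M)
        * RatFunc.X^((j₂:ℤ)*((j₂:ℤ)-1) - 2*(j₂:ℤ)*((M:ℤ)+j₂))) * hE
  · have hz : (∏ i ∈ range (j₁ - j₂), (1 - RatFunc.X^(-(2*(M:ℤ))) * ((RatFunc.X:RatFunc ℚ)^2)^i)) = 0 := by
      apply Finset.prod_eq_zero (Finset.mem_range.mpr (by omega : M < j₁ - j₂))
      rw [← pow_mul, ← zpow_natCast (RatFunc.X : RatFunc ℚ) (2*M), ← zpow_add₀ u_ne,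
        show -(2*(M:ℤ)) + ((2*M : ℕ) : ℤ) = 0 by push_cast; ring, zpow_zero, sub_self]
    rw [hz, zero_div, mul_zero, zero_mul, mul_zero, qbinom, if_neg hMn]
    simp
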